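/- The operators L_i(a) = z^{1−i} d/dz + ((3n−1) + i(n−1))/2 · z^{−i} + Σ_{μ=1}^{2k} μ a_μ z^{−i−μ}, for i = −1, 0, 1, acting on ℂ((z)), satisfy the sl(2,ℂ) commutation relations [L_i(a), L_j(a)] = (i − j) L_{i+j}(a) for i, j ∈ {−1, 0, 1} with i + j ∈ {−1, 0, 1}. -/

import Mathlib

open HahnSeries

/-- The formal derivative `d/dz` on the field `ℂ((z))` of formal Laurent
series. -/
noncomputable def laurentDeriv (f : LaurentSeries ℂ) : LaurentSeries ℂ where
  coeff := fun m => ((m + 1 : ℤ) : ℂ) * f.coeff (m + 1)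
  isPWO_support' := by
    have hsub : (Function.support fun m : ℤ => ((m + 1 : ℤ) : ℂ) * f.coeff (m + 1))
        ⊆ (fun m : ℤ => m - 1) '' Function.support f.coeff := by
      intro m hm
      have hc : f.coeff (m + 1) ≠ 0 := by
        intro h
        apply hm
        simp [Function.mem_support, h] at *
      exact ⟨m + 1, hc, by ring⟩
    exact (f.isPWO_support'.image_of_monotoneOn
      (fun a _ b _ hab => by omega)).mono hsub

/-- The first-order differential operator
`L_i(a) = z^{1−i} d/dz + ((3n−1)+i(n−1))/2 · z^{−i} + Σ_{μ=1}^{2k} μ a_μ z^{−i−μ}`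
acting on `ℂ((z))`. -/
noncomputable def Lop (n k : ℕ) (a : ℕ → ℂ) (i : ℤ) (f : LaurentSeries ℂ) :
    LaurentSeries ℂ :=
  HahnSeries.single (1 - i) (1 : ℂ) * laurentDeriv f
    + (((3 * (n : ℂ) - 1) + (i : ℂ) * ((n : ℂ) - 1)) / 2)
        • (HahnSeries.single (-i) (1 : ℂ) * f)
    + (∑ μ ∈ Finset.Icc 1 (2 * k),
        HahnSeries.single (-i - (μ : ℤ)) ((μ : ℂ) * a μ)) * f

lemma single_mul_coeff' (t m : ℤ) (c : ℂ) (f : LaurentSeries ℂ) :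
    (single t c * f).coeff m = c * f.coeff (m - t) := by
  simpa using HahnSeries.coeff_single_mul_add (r := c) (x := f) (a := m - t) (b := t)

lemma coeff_Lop (n k : ℕ) (a : ℕ → ℂ) (i : ℤ) (f : LaurentSeries ℂ) (m : ℤ) :
    (Lop n k a i f).coeff m =
      (((m : ℂ) + (i : ℂ)) + ((3 * (n : ℂ) - 1) + (i : ℂ) * ((n : ℂ) - 1)) / 2)
          * f.coeff (m + i)
        + ∑ μ ∈ Finset.Icc 1 (2 * k), (μ : ℂ) * a μ * f.coeff (m + i + (μ : ℤ)) := by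
  rw [Lop]
  rw [HahnSeries.coeff_add, HahnSeries.coeff_add, Finset.sum_mul]
  rw [single_mul_coeff', show ((((3 * (n : ℂ) - 1) + (i : ℂ) * ((n : ℂ) - 1)) / 2)
        • (HahnSeries.single (-i) (1 : ℂ) * f)).coeff m
      = (((3 * (n : ℂ) - 1) + (i : ℂ) * ((n : ℂ) - 1)) / 2) * (single (-i) (1:ℂ) * f).coeff m from rfl,
    single_mul_coeff']
  have hsum : (∑ μ ∈ Finset.Icc 1 (2*k), single (-i - (μ:ℤ)) ((μ:ℂ) * a μ) * f).coeff m
      = ∑ μ ∈ Finset.Icc 1 (2*k), (μ : ℂ) * a μ * f.coeff (m + i + (μ:ℤ)) := by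
    rw [show (∑ μ ∈ Finset.Icc 1 (2*k), single (-i - (μ:ℤ)) ((μ:ℂ) * a μ) * f).coeff m = ∑ μ ∈ Finset.Icc 1 (2*k), (single (-i - (μ:ℤ)) ((μ:ℂ) * a μ) * f).coeff m from map_sum (coeff.addMonoidHom m) _ _]
    refine Finset.sum_congr rfl fun μ _ => ?_
    rw [single_mul_coeff']
    ring_nf
  rw [hsum]
  have : (laurentDeriv f).coeff (m - (1 - i)) = ((m - (1-i) + 1 : ℤ) : ℂ) * f.coeff (m - (1-i) + 1) := rfl
  rw [this, show m - (1-i) + 1 = m + i by ring]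
  push_cast
  ring_nf

/-- The operators `L_{-1}(a), L_0(a), L_1(a)` on `ℂ((z))` satisfy the
`sl(2,ℂ)` commutation relations `[L_i(a), L_j(a)] = (i − j) L_{i+j}(a)`. -/
theorem Lop_sl2_relations (n k : ℕ) (hn : 0 < n) (hk : 0 < k) (a : ℕ → ℂ)
    (i j : ℤ) (hi : i ∈ ({-1, 0, 1} : Set ℤ)) (hj : j ∈ ({-1, 0, 1} : Set ℤ))
    (hij : i + j ∈ ({-1, 0, 1} : Set ℤ)) (f : LaurentSeries ℂ) :
    Lop n k a i (Lop n k a j f) - Lop n k a j (Lop n k a i f)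
      = (i - j) • Lop n k a (i + j) f := by
  ext m
  rw [HahnSeries.coeff_sub, show ((i - j) • Lop n k a (i+j) f).coeff m = ((i - j : ℤ) : ℂ) * (Lop n k a (i+j) f).coeff m by rw [← Int.cast_smul_eq_zsmul ℂ]; rfl]
  simp only [coeff_Lop]
  push_cast
  simp only [show m+j+i = m+i+j from by ring, show m+(i+j) = m+i+j from by ring,
    show ∀ x:ℤ, m+j+i+x = m+i+j+x from fun x => by ring,
    show ∀ x:ℤ, m+(i+j)+x = m+i+j+x from fun x => by ring,
    show ∀ x:ℤ, m+i+x+j = m+i+j+x from fun x => by ring,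
    show ∀ x:ℤ, m+j+x+i = m+i+j+x from fun x => by ring,
    show ∀ x y:ℤ, m+i+x+j+y = m+i+j+(x+y) from fun x y => by ring,
    show ∀ x y:ℤ, m+j+x+i+y = m+i+j+(x+y) from fun x y => by ring]
  have hS : (∑ x ∈ Finset.Icc 1 (2*k), (x:ℂ) * a x *
        (((m:ℂ)+(i:ℂ)+(x:ℂ)+(j:ℂ) + (3*(n:ℂ)-1+(j:ℂ)*((n:ℂ)-1))/2) * f.coeff (m+i+j+(x:ℤ))
          + ∑ y ∈ Finset.Icc 1 (2*k), (y:ℂ)*a y*f.coeff (m+i+j+(x:ℤ)+(y:ℤ))))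
      - (∑ x ∈ Finset.Icc 1 (2*k), (x:ℂ) * a x *
        (((m:ℂ)+(j:ℂ)+(x:ℂ)+(i:ℂ) + (3*(n:ℂ)-1+(i:ℂ)*((n:ℂ)-1))/2) * f.coeff (m+i+j+(x:ℤ))
          + ∑ y ∈ Finset.Icc 1 (2*k), (y:ℂ)*a y*f.coeff (m+i+j+(x:ℤ)+(y:ℤ))))
      = (((j:ℂ)-(i:ℂ))*((n:ℂ)-1)/2) * ∑ x ∈ Finset.Icc 1 (2*k), (x:ℂ)*a x*f.coeff (m+i+j+(x:ℤ)) := by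
    rw [← Finset.sum_sub_distrib, Finset.mul_sum]
    refine Finset.sum_congr rfl fun x _ => ?_
    ring
  linear_combination hS
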